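/- For all k, l ∈ ℕ and r, s ≥ 1, and all a ∈ V¹_{k,r} and b ∈ V²_{l,s}, one has φ(a⋆ b) = 0. -/
import Mathlib


open scoped ComplexOrder

noncomputable section

/-- The product `S_{μ₁} ⋯ S_{μ_p}` along a word `μ` (with `S_μ = 1` for the empty word). -/
def wordProd {A : Type*} [Monoid A] {n : ℕ} (S : Fin n → A) (μ : List (Fin n)) : A :=
  (μ.map S).prod

/-- `B_{r,s} = Span { S_μ S_ν⋆ : |μ| = r, |ν| = s }`;  `F_k = B_{k,k}`. -/
def Bspan {A : Type*} [Ring A] [Algebra ℂ A] [StarRing A] {n : ℕ}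
    (S : Fin n → A) (r s : ℕ) : Submodule ℂ A :=
  Submodule.span ℂ
    {a | ∃ μ ν : List (Fin n), μ.length = r ∧ ν.length = s ∧
        a = wordProd S μ * star (wordProd S ν)}

/-- `W_0 = ℂ·1` and, for `k ≥ 1`,
`W_k = {x ∈ F_k : φ(y⋆ x) = 0 for all y ∈ F_{k-1}}`. -/
def Wsub {A : Type*} [NormedRing A] [NormedAlgebra ℂ A] [StarRing A] {n : ℕ}
    (φ : A →L[ℂ] ℂ) (S : Fin n → A) : ℕ → Submodule ℂ A
  | 0 => Submodule.span ℂ {(1 : A)}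
  | (k + 1) =>
      Bspan S (k + 1) (k + 1) ⊓
        ⨅ y ∈ Bspan S k k,
          LinearMap.ker ((φ : A →ₗ[ℂ] ℂ) ∘ₗ LinearMap.mulLeft ℂ (star y))

/-- `V¹_{k,r} = Span { S_μ x : |μ| = r, x ∈ W_k }`. -/
def V1 {A : Type*} [NormedRing A] [NormedAlgebra ℂ A] [StarRing A] {n : ℕ}
    (φ : A →L[ℂ] ℂ) (S : Fin n → A) (k r : ℕ) : Submodule ℂ A :=
  Submodule.span ℂ
    {a | ∃ μ : List (Fin n), ∃ x : A, μ.length = r ∧ x ∈ Wsub φ S k ∧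
        a = wordProd S μ * x}

/-- `V²_{k,r} = Span { x S_γ⋆ : |γ| = r, x ∈ W_k }`. -/
def V2 {A : Type*} [NormedRing A] [NormedAlgebra ℂ A] [StarRing A] {n : ℕ}
    (φ : A →L[ℂ] ℂ) (S : Fin n → A) (k r : ℕ) : Submodule ℂ A :=
  Submodule.span ℂ
    {a | ∃ γ : List (Fin n), ∃ x : A, γ.length = r ∧ x ∈ Wsub φ S k ∧
        a = x * star (wordProd S γ)}

section Aux

variable {A : Type*} [NormedRing A] [StarRing A] [CStarRing A]
    [NormedAlgebra ℂ A] [StarModule ℂ A] [CompleteSpace A] {n : ℕ}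

lemma wordProd_nil (S : Fin n → A) : wordProd S [] = 1 := rfl

lemma wordProd_cons (S : Fin n → A) (i : Fin n) (μ : List (Fin n)) :
    wordProd S (i :: μ) = S i * wordProd S μ := by simp [wordProd]

lemma wordProd_append (S : Fin n → A) (μ ν : List (Fin n)) :
    wordProd S (μ ++ ν) = wordProd S μ * wordProd S ν := by simp [wordProd]

lemma S_orth (S : Fin n → A)
    (hS1 : ∀ i, star (S i) * S i = 1)
    (hS2 : ∑ j, S j * star (S j) = 1)
    {i j : Fin n} (hij : i ≠ j) : star (S i) * S j = 0 := by
  letI : CStarAlgebra A := ⟨⟩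
  letI := CStarAlgebra.spectralOrder A
  haveI := CStarAlgebra.spectralOrderedRing A
  have h1 : ∑ m, star (star (S m) * S j) * (star (S m) * S j) = 1 := by
    have h0 : star (S j) * (∑ m, S m * star (S m)) * S j = 1 := by
      rw [hS2, mul_one, hS1]
    calc ∑ m, star (star (S m) * S j) * (star (S m) * S j)
        = star (S j) * (∑ m, S m * star (S m)) * S j := by
          rw [Finset.mul_sum, Finset.sum_mul]
          exact Finset.sum_congr rfl fun m _ => by
            simp only [star_mul, star_star]; noncomm_ring
      _ = 1 := h0
  have hj : star (star (S j) * S j) * (star (S j) * S j) = 1 := by rw [hS1]; simp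
  have h2 : ∑ m ∈ Finset.univ.erase j,
      star (star (S m) * S j) * (star (S m) * S j) = 0 := by
    have := Finset.add_sum_erase Finset.univ
      (fun m => star (star (S m) * S j) * (star (S m) * S j)) (Finset.mem_univ j)
    beta_reduce at this
    rw [hj, h1] at this
    exact add_left_cancel (a := (1:A)) (c := 0) (by rw [add_zero]; exact this)
  have h3 := (Finset.sum_eq_zero_iff_of_nonneg
    (fun m _ => star_mul_self_nonneg (star (S m) * S j))).mp h2 i
    (Finset.mem_erase.mpr ⟨hij, Finset.mem_univ i⟩)
  exact (CStarRing.star_mul_self_eq_zero_iff _).mp h3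


lemma word_red (S : Fin n → A)
    (hS1 : ∀ i, star (S i) * S i = 1)
    (hS2 : ∑ j, S j * star (S j) = 1) :
    ∀ π ρ : List (Fin n), star (wordProd S π) * wordProd S ρ =
      if π <+: ρ then wordProd S (List.drop π.length ρ)
      else if ρ <+: π then star (wordProd S (List.drop ρ.length π))
      else 0 := by
  intro π
  induction π with
  | nil =>
    intro ρ
    simp [wordProd_nil]
  | cons i π ih =>
    intro ρ
    cases ρ with
    | nil =>
      have h1 : ¬ ((i :: π) <+: ([] : List (Fin n))) := by simp
      simp [wordProd_nil, h1]
    | cons j ρ =>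
      rw [wordProd_cons, wordProd_cons, star_mul]
      have hassoc : star (wordProd S π) * star (S i) * (S j * wordProd S ρ)
          = star (wordProd S π) * (star (S i) * S j) * wordProd S ρ := by noncomm_ring
      rw [hassoc]
      by_cases hij : i = j
      · subst hij
        rw [hS1, mul_one, ih ρ]
        simp [List.cons_prefix_cons]
      · rw [S_orth S hS1 hS2 hij]
        have h1 : ¬ ((i :: π) <+: (j :: ρ)) := fun h => hij (List.cons_prefix_cons.mp h).1
        have h2 : ¬ ((j :: ρ) <+: (i :: π)) := fun h => hij ((List.cons_prefix_cons.mp h).1).symm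
        simp [h1, h2]

lemma key_vanish (S : Fin n → A)
    (hS1 : ∀ i, star (S i) * S i = 1)
    (hS2 : ∑ j, S j * star (S j) = 1)
    (φ : A →L[ℂ] ℂ)
    (hφ : ∀ μ ν : List (Fin n),
      φ (wordProd S μ * star (wordProd S ν)) =
        if μ = ν then ((n : ℂ) ^ μ.length)⁻¹ else 0)
    (β π ρ τ : List (Fin n))
    (hlen : β.length + ρ.length ≠ π.length + τ.length) :
    φ (wordProd S β * star (wordProd S π) * (wordProd S ρ * star (wordProd S τ))) = 0 := by
  by_cases h1 : π <+: ρ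
  · obtain ⟨δ, rfl⟩ := h1
    have hred := word_red S hS1 hS2 π (π ++ δ)
    rw [if_pos ⟨δ, rfl⟩, List.drop_left] at hred
    have heq : wordProd S β * star (wordProd S π) * (wordProd S (π ++ δ) * star (wordProd S τ))
        = wordProd S (β ++ δ) * star (wordProd S τ) := by
      rw [wordProd_append S β δ]
      calc wordProd S β * star (wordProd S π) * (wordProd S (π ++ δ) * star (wordProd S τ))
          = wordProd S β * (star (wordProd S π) * wordProd S (π ++ δ)) * star (wordProd S τ) := by
            noncomm_ring
        _ = wordProd S β * wordProd S δ * star (wordProd S τ) := by rw [hred]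
    rw [heq, hφ]
    have hne : β ++ δ ≠ τ := by
      intro h
      apply hlen
      have := congrArg List.length h
      simp only [List.length_append] at this ⊢
      omega
    rw [if_neg hne]
  · by_cases h2 : ρ <+: π
    · obtain ⟨δ, rfl⟩ := h2
      have hred := word_red S hS1 hS2 (ρ ++ δ) ρ
      rw [if_neg h1, if_pos ⟨δ, rfl⟩, List.drop_left] at hred
      have heq : wordProd S β * star (wordProd S (ρ ++ δ)) * (wordProd S ρ * star (wordProd S τ))
          = wordProd S β * star (wordProd S (τ ++ δ)) := by
        rw [wordProd_append S τ δ, star_mul]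
        calc wordProd S β * star (wordProd S (ρ ++ δ)) * (wordProd S ρ * star (wordProd S τ))
            = wordProd S β * (star (wordProd S (ρ ++ δ)) * wordProd S ρ) * star (wordProd S τ) := by
              noncomm_ring
          _ = wordProd S β * star (wordProd S δ) * star (wordProd S τ) := by rw [hred]
          _ = wordProd S β * (star (wordProd S δ) * star (wordProd S τ)) := by noncomm_ring
      rw [heq, hφ]
      have hne : β ≠ τ ++ δ := by
        intro h
        apply hlen
        have := congrArg List.length h
        simp only [List.length_append] at this ⊢
        omega
      rw [if_neg hne]
    · have hred := word_red S hS1 hS2 π ρ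
      rw [if_neg h1, if_neg h2] at hred
      have heq : wordProd S β * star (wordProd S π) * (wordProd S ρ * star (wordProd S τ)) = 0 := by
        calc wordProd S β * star (wordProd S π) * (wordProd S ρ * star (wordProd S τ))
            = wordProd S β * (star (wordProd S π) * wordProd S ρ) * star (wordProd S τ) := by
              noncomm_ring
          _ = 0 := by rw [hred]; simp
      rw [heq, map_zero]

end Aux

/-- For all `k, l ∈ ℕ` and `r, s ≥ 1`, the subspaces `V¹_{k,r}` and
`V²_{l,s}` are φ-orthogonal: `φ(a⋆ b) = 0` for `a ∈ V¹_{k,r}`, `b ∈ V²_{l,s}`. -/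
theorem V1_orthogonal_V2
    {A : Type*} [NormedRing A] [StarRing A] [CStarRing A]
    [NormedAlgebra ℂ A] [StarModule ℂ A] [CompleteSpace A]
    {n : ℕ} (hn : 2 ≤ n) (S : Fin n → A)
    (hS1 : ∀ i, star (S i) * S i = 1)
    (hS2 : ∑ j, S j * star (S j) = 1)
    (φ : A →L[ℂ] ℂ)
    (hφ : ∀ μ ν : List (Fin n),
      φ (wordProd S μ * star (wordProd S ν)) =
        if μ = ν then ((n : ℂ) ^ μ.length)⁻¹ else 0)
    (k l : ℕ) (r s : ℕ) (hr : 1 ≤ r) (hs : 1 ≤ s)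
    (a : A) (ha : a ∈ V1 φ S k r) (b : A) (hb : b ∈ V2 φ S l s) :
    φ (star a * b) = 0 := by
  have hWB : ∀ (m : ℕ) (x : A), x ∈ Wsub φ S m → x ∈ Bspan S m m := by
    intro m x hx
    cases m with
    | zero =>
      rw [Wsub] at hx
      refine Submodule.span_le.mpr ?_ hx
      rintro y hy
      rw [Set.mem_singleton_iff] at hy
      subst hy
      exact Submodule.subset_span ⟨[], [], rfl, rfl, by simp [wordProd_nil]⟩
    | succ m =>
      rw [Wsub] at hx
      exact hx.1
  rw [V2] at hb
  induction hb using Submodule.span_induction with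
  | mem b hbmem =>
    obtain ⟨γ, y, hγ, hy, rfl⟩ := hbmem
    have hy' := hWB l y hy
    rw [Bspan] at hy'
    clear hy
    induction hy' using Submodule.span_induction with
    | mem y hymem =>
      obtain ⟨ρ, σ, hρ, hσ, rfl⟩ := hymem
      rw [V1] at ha
      induction ha using Submodule.span_induction with
      | mem a hamem =>
        obtain ⟨μ, x, hμ, hx, rfl⟩ := hamem
        have hx' := hWB k x hx
        rw [Bspan] at hx'
        clear hx
        induction hx' using Submodule.span_induction with
        | mem x hxmem =>
          obtain ⟨α, β, hα, hβ, rfl⟩ := hxmem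
          have hlen : β.length + ρ.length ≠ (μ ++ α).length + (γ ++ σ).length := by
            simp only [List.length_append, hβ, hρ, hμ, hα, hγ, hσ]
            omega
          have h := key_vanish S hS1 hS2 φ hφ β (μ ++ α) ρ (γ ++ σ) hlen
          rw [wordProd_append, wordProd_append] at h
          simp only [star_mul, star_star, mul_assoc] at h ⊢
          exact h
        | zero => simp
        | add x x' _ _ ih ih' =>
          rw [mul_add, star_add, add_mul, map_add, ih, ih', add_zero]
        | smul c x _ ih =>
          rw [mul_smul_comm, star_smul, smul_mul_assoc, map_smul, ih, smul_zero]
      | zero => simp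
      | add a a' _ _ ih ih' => rw [star_add, add_mul, map_add, ih, ih', add_zero]
      | smul c a _ ih => rw [star_smul, smul_mul_assoc, map_smul, ih, smul_zero]
    | zero => simp
    | add y y' _ _ ih ih' => rw [add_mul, mul_add, map_add, ih, ih', add_zero]
    | smul c y _ ih => rw [smul_mul_assoc, mul_smul_comm, map_smul, ih, smul_zero]
  | zero => simp
  | add b b' _ _ ih ih' => rw [mul_add, map_add, ih, ih', add_zero]
  | smul c b _ ih => rw [mul_smul_comm, map_smul, ih, smul_zero]
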